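/- Let p ≥ 1 and let E₀ ⊆ V×V be a set of edges on V = {0,…,p−1} with (i,j) ∈ E₀ implying i ≠ j, and suppose there is a linear order ≺ on V such that (i,j) ∈ E₀ implies i ≺ j (so (V,E₀) is a DAG). Let t ∈ ℝ with |t| < 1, let B be an E₀-supported real p×p matrix (in particular B has zero diagonal), set A = t·I + B, let w : V → ℝ and D = diag(w). Then A is Schur stable, and the steady-state covariance Σ = ∑_{l=0}^∞ A^l D (Aᵀ)^l satisfies, for all i, j ∈ V: Σ_{ij} equals the finite sum, over all base treks between i and j, of C(x, y; t) · (B-weight of f) · (B-weight of g) · w_{r}; here a base trek between i and j consists of natural numbers x, y and a pair (f, g) where f is a walk of length x and g is a walk of length y in (V,E₀), both starting at a common vertex r (the top), with f ending at i and g ending at j (there are only finitely many base treks since (V,E₀) is a DAG), and C(x,y;t) = t^{|x−y|} · p_{x,y}(t) / (1−t²)^{x+y+1} with p_{x,y}(t) = ∑_{l=0}^{min(x,y)} t^{2l} · binom(max(x,y), min(x,y)−l) · binom(min(x,y), l). -/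

import Mathlib

open Matrix

/-- `f` is a walk of length `l` in the directed graph with edge set `E`. -/
def IsWalk {p : ℕ} (E : Finset (Fin p × Fin p)) {l : ℕ} (f : Fin (l + 1) → Fin p) : Prop :=
  ∀ s : Fin l, (f s.castSucc, f s.succ) ∈ E

instance {p : ℕ} (E : Finset (Fin p × Fin p)) {l : ℕ} (f : Fin (l + 1) → Fin p) :
    Decidable (IsWalk E f) :=
  inferInstanceAs (Decidable (∀ s : Fin l, (f s.castSucc, f s.succ) ∈ E))

/-- The `A`-weight of a walk: the product of the entries `A_{f(s+1) f(s)}`. -/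
def walkWeight {p : ℕ} (A : Matrix (Fin p) (Fin p) ℝ) {l : ℕ}
    (f : Fin (l + 1) → Fin p) : ℝ :=
  ∏ s : Fin l, A (f s.succ) (f s.castSucc)

/-- `p_{x,y}(t) = ∑_{l=0}^{min(x,y)} t^{2l} binom(max(x,y), min(x,y)−l) binom(min(x,y), l)`. -/
noncomputable def pPoly (x y : ℕ) (t : ℝ) : ℝ :=
  ∑ l ∈ Finset.range (min x y + 1),
    t ^ (2 * l) * ((max x y).choose (min x y - l) : ℝ) * ((min x y).choose l : ℝ)

/-- `C(x,y;t) = t^{|x−y|} p_{x,y}(t) / (1−t²)^{x+y+1}`. -/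
noncomputable def Ccoef (x y : ℕ) (t : ℝ) : ℝ :=
  t ^ (max x y - min x y) * pPoly x y t / (1 - t ^ 2) ^ (x + y + 1)

/-- The finite sum, over all base treks between `i` and `j` consisting of a walk of
length `x` and a walk of length `y` in `(V,E₀)` with common top, of
`C(x,y;t) · (B-weight of f) · (B-weight of g) · w_{top}`. -/
noncomputable def baseTrekSum (p : ℕ) (E₀ : Finset (Fin p × Fin p))
    (B : Matrix (Fin p) (Fin p) ℝ) (t : ℝ) (w : Fin p → ℝ) (i j : Fin p) (x y : ℕ) : ℝ :=
  ∑ f : Fin (x + 1) → Fin p, ∑ g : Fin (y + 1) → Fin p,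
    if IsWalk E₀ f ∧ IsWalk E₀ g ∧ f 0 = g 0 ∧ f (Fin.last x) = i ∧ g (Fin.last y) = j
    then Ccoef x y t * walkWeight B f * walkWeight B g * w (f 0)
    else 0

/-!
Acyclicity makes `B` nilpotent, so `t • 1 + B` has spectrum `{t}` and
`(t • 1 + B) ^ l = ∑_{x < p} C(l, x) t^(l-x) B^x`. Hence
`Σ = ∑_{x, y < p} c_{x,y} • B^x D (B^y)ᵀ` with
`c_{x,y} = ∑_l C(l, x) C(l, y) t^(l-x) t^(l-y)`, while the `(i, j)` entry of `B^x D (B^y)ᵀ`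
is the sum over pairs of walks of lengths `x`, `y` with a common top.

To evaluate `c_{x,y}` for `x ≤ y`, split `C(l, x) C(l, y) = ∑_j C(x, j) C(x+y-j, x) C(l, x+y-j)`
and sum each negative binomial series `∑_l C(l, n) s^(l-n) = (1 - s)^-(n+1)`, `s = t²`. Over the
common denominator `(1 - s)^(x+y+1)` the numerator is a polynomial in Bernstein form; Vandermonde's
identity turns its Bernstein coefficients `C(x, k) C(k+y, x)` into the monomial coefficients
`C(x, i) C(y, x-i)` of `p_{x,y}`.
-/

open Finset

section Binomial

variable {R : Type*} [CommRing R]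

theorem sum_choose_mul_choose_mul_pow_mul_one_sub_pow (z : R) (x i : ℕ) :
    ∑ k ∈ range (x + 1), (x.choose k * k.choose i : R) * z ^ k * (1 - z) ^ (x - k)
      = x.choose i * z ^ i := by
  rcases le_or_gt i x with hix | hxi
  · obtain ⟨d, rfl⟩ := Nat.exists_eq_add_of_le hix
    have hlow : ∑ k ∈ range i,
        ((i + d).choose k * k.choose i : R) * z ^ k * (1 - z) ^ (i + d - k) = 0 :=
      sum_eq_zero fun k hk => by simp [Nat.choose_eq_zero_of_lt (mem_range.1 hk)]
    have hterm : ∀ m ∈ range (d + 1),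
        ((i + d).choose (i + m) * (i + m).choose i : R) * z ^ (i + m) *
            (1 - z) ^ (i + d - (i + m))
          = (i + d).choose i * z ^ i * (z ^ m * (1 - z) ^ (d - m) * d.choose m) := by
      intro m _
      rw [← Nat.cast_mul, Nat.choose_mul (Nat.le_add_right i m), Nat.add_sub_cancel_left,
        Nat.add_sub_cancel_left, Nat.add_sub_add_left]
      push_cast
      ring
    rw [show i + d + 1 = i + (d + 1) by ring, sum_range_add, hlow, zero_add,
      sum_congr rfl hterm, ← mul_sum, ← add_pow, add_sub_cancel, one_pow, mul_one]
  · rw [Nat.choose_eq_zero_of_lt hxi, Nat.cast_zero, zero_mul]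
    refine sum_eq_zero fun k hk => ?_
    rw [Nat.choose_eq_zero_of_lt (by rw [mem_range] at hk; omega : k < i)]
    simp

theorem sum_choose_mul_add_choose_mul_pow_mul_one_sub_pow (z : R) (x y : ℕ) :
    ∑ k ∈ range (x + 1), (x.choose k * (k + y).choose x : R) * z ^ k * (1 - z) ^ (x - k)
      = ∑ i ∈ range (x + 1), (x.choose i * y.choose (x - i) : R) * z ^ i := by
  have vandermonde : ∀ k, ((k + y).choose x : R)
      = ∑ i ∈ range (x + 1), (k.choose i * y.choose (x - i) : R) := fun k => by
    rw [Nat.add_choose_eq, Nat.sum_antidiagonal_eq_sum_range_succ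
      (fun a b => k.choose a * y.choose b)]
    push_cast
    rfl
  calc _ = ∑ k ∈ range (x + 1), ∑ i ∈ range (x + 1), (y.choose (x - i) : R) *
        ((x.choose k * k.choose i : R) * z ^ k * (1 - z) ^ (x - k)) := by
        refine sum_congr rfl fun k _ => ?_
        rw [vandermonde, mul_sum, sum_mul, sum_mul]
        exact sum_congr rfl fun i _ => by ring
    _ = _ := by
        rw [sum_comm]
        refine sum_congr rfl fun i _ => ?_
        rw [← mul_sum, sum_choose_mul_choose_mul_pow_mul_one_sub_pow]
        ring

end Binomial

/-- A pair of an `x`-subset and a `y`-subset of an `l`-set is a union of size `x + y - j`,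
where `j` is the size of the intersection, together with a splitting of that union. -/
theorem Nat.choose_mul_choose_eq_sum {x y : ℕ} (hxy : x ≤ y) (l : ℕ) :
    l.choose x * l.choose y
      = ∑ j ∈ range (x + 1), x.choose j * (x + y - j).choose x * l.choose (x + y - j) := by
  rcases lt_or_ge l x with hlx | hxl
  · rw [Nat.choose_eq_zero_of_lt hlx, zero_mul]
    refine (sum_eq_zero fun j hj => ?_).symm
    have := mem_range.1 hj
    rw [Nat.choose_eq_zero_of_lt (by omega : l < x + y - j), mul_zero]
  obtain ⟨m, rfl⟩ := Nat.exists_eq_add_of_le hxl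
  rw [Nat.add_choose_eq x m y, Nat.sum_antidiagonal_eq_sum_range_succ
    (fun a b => x.choose a * m.choose b), mul_sum,
    ← sum_subset (range_subset_range.2 (by omega : x + 1 ≤ y + 1)) fun j _ hj => by
      rw [Nat.choose_eq_zero_of_lt (by rw [mem_range] at hj; omega : x < j)]; simp]
  refine sum_congr rfl fun j hj => ?_
  have := mem_range.1 hj
  have h := Nat.choose_mul (n := x + m) (k := x + y - j) (by omega : x ≤ x + y - j)
  rw [Nat.add_sub_cancel_left, show x + y - j - x = y - j by omega] at h
  calc (x + m).choose x * (x.choose j * m.choose (y - j))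
      = x.choose j * ((x + m).choose x * m.choose (y - j)) := by ring
    _ = _ := by rw [← h]; ring

theorem hasSum_choose_mul_pow_sub_mul_pow_sub {𝕜 : Type*} [NormedField 𝕜] {t : 𝕜}
    (ht : ‖t‖ < 1) {x y n : ℕ} (hx : x ≤ n) (hy : y ≤ n) :
    HasSum (fun l => (l.choose n : 𝕜) * (t ^ (l - x) * t ^ (l - y)))
      (t ^ (n - x) * t ^ (n - y) / (1 - t ^ 2) ^ (n + 1)) := by
  have ht2 : ‖t ^ 2‖ < 1 := by
    rw [norm_pow]; exact pow_lt_one₀ (norm_nonneg t) ht two_ne_zero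
  rw [← hasSum_nat_add_iff' n, sum_eq_zero fun l hl => by
    simp [Nat.choose_eq_zero_of_lt (mem_range.1 hl)], sub_zero]
  rw [← mul_one_div]
  refine ((hasSum_choose_mul_geometric_of_norm_lt_one n ht2).mul_left _).congr_fun fun m => ?_
  rw [show m + n - x = n - x + m by omega, show m + n - y = n - y + m by omega]
  ring

theorem Ccoef_comm (x y : ℕ) (t : ℝ) : Ccoef x y t = Ccoef y x t := by
  unfold Ccoef pPoly
  rw [min_comm y x, max_comm y x, Nat.add_comm y x]

theorem Ccoef_eq_sum {x y : ℕ} (hxy : x ≤ y) {t : ℝ} (ht : 1 - t ^ 2 ≠ 0) :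
    Ccoef x y t = ∑ j ∈ range (x + 1), (x.choose j * (x + y - j).choose x : ℝ) *
      (t ^ (y - j) * t ^ (x - j) / (1 - t ^ 2) ^ (x + y - j + 1)) := by
  set f : ℕ → ℝ := fun k =>
    (x.choose k * (k + y).choose x : ℝ) * (t ^ 2) ^ k * (1 - t ^ 2) ^ (x - k)
  calc Ccoef x y t = t ^ (y - x) / (1 - t ^ 2) ^ (x + y + 1) * ∑ k ∈ range (x + 1), f k := by
        rw [sum_choose_mul_add_choose_mul_pow_mul_one_sub_pow, Ccoef, pPoly, min_eq_left hxy,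
          max_eq_right hxy, mul_div_right_comm]
        congr 1
        exact sum_congr rfl fun l _ => by rw [pow_mul]; ring
    _ = t ^ (y - x) / (1 - t ^ 2) ^ (x + y + 1) * ∑ j ∈ range (x + 1), f (x + 1 - 1 - j) := by
        rw [sum_range_reflect]
    _ = _ := by
        rw [mul_sum]
        refine sum_congr rfl fun j hj => ?_
        have hj := mem_range.1 hj
        have ht2 : t ^ (y - j) * t ^ (x - j) = t ^ (y - x) * (t ^ 2) ^ (x - j) := by
          rw [← pow_mul, ← pow_add, ← pow_add]; congr 1; omega
        have hden :
            (1 - t ^ 2) ^ (x + y + 1) = (1 - t ^ 2) ^ (x + y - j + 1) * (1 - t ^ 2) ^ j := by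
          rw [← pow_add]; congr 1; omega
        simp only [f]
        rw [show x + 1 - 1 - j = x - j by omega, Nat.choose_symm (by omega),
          show x - j + y = x + y - j by omega, show x - (x - j) = j by omega, ht2, hden]
        field_simp

theorem hasSum_choose_mul_pow_mul_choose_mul_pow {t : ℝ} (ht : |t| < 1) (x y : ℕ) :
    HasSum (fun l : ℕ => (l.choose x * t ^ (l - x)) * (l.choose y * t ^ (l - y)))
      (Ccoef x y t) := by
  wlog hxy : x ≤ y generalizing x y
  · rw [Ccoef_comm]
    exact (this y x (le_of_not_ge hxy)).congr_fun fun l => mul_comm _ _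
  have hnorm : ‖t‖ < 1 := by rwa [Real.norm_eq_abs]
  have hsq : 1 - t ^ 2 ≠ 0 := by
    have := pow_lt_one₀ (abs_nonneg t) ht two_ne_zero
    rw [sq_abs] at this
    linarith
  have hterm : ∀ l : ℕ, (l.choose x * t ^ (l - x)) * (l.choose y * t ^ (l - y))
      = ∑ j ∈ range (x + 1), (x.choose j * (x + y - j).choose x : ℝ) *
          ((l.choose (x + y - j) : ℝ) * (t ^ (l - x) * t ^ (l - y))) := fun l => by
    rw [show (l.choose x * t ^ (l - x)) * (l.choose y * t ^ (l - y))
        = ((l.choose x * l.choose y : ℕ) : ℝ) * (t ^ (l - x) * t ^ (l - y)) by push_cast; ring,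
      Nat.choose_mul_choose_eq_sum hxy, Nat.cast_sum, sum_mul]
    push_cast
    exact sum_congr rfl fun j _ => by ring
  rw [Ccoef_eq_sum hxy hsq]
  refine (hasSum_sum fun j hj => ?_).congr_fun hterm
  have hj := mem_range.1 hj
  have h := (hasSum_choose_mul_pow_sub_mul_pow_sub hnorm (x := x) (y := y) (n := x + y - j)
    (by omega) (by omega)).mul_left (x.choose j * (x + y - j).choose x : ℝ)
  rwa [show x + y - j - x = y - j by omega, show x + y - j - y = x - j by omega] at h

theorem spectrum.algebraMap_add_subset_singleton {𝕜 A : Type*} [Field 𝕜] [Ring A]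
    [Algebra 𝕜 A] (r : 𝕜) {N : A} (hN : IsNilpotent N) :
    spectrum 𝕜 (algebraMap 𝕜 A r + N) ⊆ {r} := by
  intro μ hμ
  by_contra hne
  refine spectrum.mem_iff.1 hμ ?_
  rw [show algebraMap 𝕜 A μ - (algebraMap 𝕜 A r + N) = algebraMap 𝕜 A (μ - r) + -N by
    rw [map_sub]; abel]
  exact hN.neg.isUnit_add_left_of_commute
    ((isUnit_iff_ne_zero.2 (sub_ne_zero.2 hne)).map _) (Algebra.commute_algebraMap_right _ _)

theorem Matrix.spectrum_map_smul_one_add_subset {n : Type*} [Fintype n] [DecidableEq n]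
    (t : ℝ) {B : Matrix n n ℝ} (hB : IsNilpotent B) :
    spectrum ℂ ((t • 1 + B).map (algebraMap ℝ ℂ)) ⊆ {(t : ℂ)} := by
  have hmap : (t • 1 + B).map (algebraMap ℝ ℂ)
      = algebraMap ℂ _ (t : ℂ) + B.map (algebraMap ℝ ℂ) := by
    ext a b
    by_cases h : a = b <;> simp [h, algebraMap_matrix_apply]
  rw [hmap]
  exact spectrum.algebraMap_add_subset_singleton _ (hB.map (algebraMap ℝ ℂ).mapMatrix)

theorem smul_one_add_pow_eq_sum_of_pow_eq_zero {R A : Type*} [CommSemiring R] [Semiring A]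
    [Algebra R A] (r : R) {N : A} {p : ℕ} (hN : N ^ p = 0) (l : ℕ) :
    (r • 1 + N) ^ l = ∑ x ∈ range p, (l.choose x * r ^ (l - x)) • N ^ x := by
  have hcomm : Commute N (r • 1) := (Commute.one_right N).smul_right r
  rw [add_comm, hcomm.add_pow]
  calc ∑ x ∈ range (l + 1), N ^ x * (r • 1) ^ (l - x) * (l.choose x : A)
      = ∑ x ∈ range (l + 1), (l.choose x * r ^ (l - x)) • N ^ x := sum_congr rfl fun x _ => by
        rw [smul_pow, one_pow, mul_smul_one, smul_mul_assoc,
          ← (Nat.cast_commute (l.choose x) (N ^ x)).eq, ← nsmul_eq_mul,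
          ← Nat.cast_smul_eq_nsmul R, smul_smul, mul_comm]
    _ = ∑ x ∈ range (l + 1 + p), (l.choose x * r ^ (l - x)) • N ^ x :=
        sum_subset (range_mono (by omega)) fun x _ hx => by
          rw [Nat.choose_eq_zero_of_lt (by simp at hx; omega)]; simp
    _ = _ := (sum_subset (range_mono (by omega)) fun x _ hx => by
          rw [pow_eq_zero_of_le (by simp at hx; omega) hN, smul_zero]).symm

theorem Matrix.pow_card_eq_zero_of_apply_ne_zero {n R : Type*} [Fintype n] [DecidableEq n]
    [Semiring R] (r : n → n → Prop) [IsStrictOrder n r] (M : Matrix n n R)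
    (hM : ∀ i j, M i j ≠ 0 → r j i) : M ^ Fintype.card n = 0 := by
  classical
  let below : n → ℕ := fun v => #{u | r u v}
  have below_lt_card (v : n) : below v < Fintype.card n :=
    card_lt_card (filter_ssubset.2 ⟨v, mem_univ v, irrefl v⟩)
  have below_lt_below {a b : n} (hab : r a b) : below a < below b := by
    refine card_lt_card ⟨fun u hu => ?_, fun h => irrefl a (mem_filter.1 (h ?_)).2⟩
    · simp only [mem_filter, mem_univ, true_and] at hu ⊢
      exact _root_.trans hu hab
    · simpa using hab
  have chain (k : ℕ) : ∀ i j, (M ^ k) i j ≠ 0 → below j + k ≤ below i := by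
    induction k with
    | zero =>
      intro i j h
      obtain rfl : i = j := by_contra fun hij => h (by rw [pow_zero, one_apply_ne hij])
      omega
    | succ k ih =>
      intro i j h
      rw [pow_succ, mul_apply] at h
      obtain ⟨c, -, hc⟩ := exists_ne_zero_of_sum_ne_zero h
      have := ih i c (left_ne_zero_of_mul hc)
      have := below_lt_below (hM c j (right_ne_zero_of_mul hc))
      omega
  ext i j
  by_contra h
  have := chain _ i j h
  have := below_lt_card i
  omega

theorem Matrix.sum_smul_mul_mul_transpose_sum_smul {ι n R : Type*} [Fintype n] [CommSemiring R]
    (s : Finset ι) (a : ι → R) (M : ι → Matrix n n R) (D : Matrix n n R) :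
    (∑ x ∈ s, a x • M x) * D * (∑ y ∈ s, a y • M y)ᵀ
      = ∑ x ∈ s, ∑ y ∈ s, (a x * a y) • (M x * D * (M y)ᵀ) := by
  simp only [sum_mul, mul_sum, transpose_sum, transpose_smul, smul_mul_assoc, mul_smul_comm,
    smul_sum, smul_smul]
  rw [sum_comm]
  exact sum_congr rfl fun x _ => sum_congr rfl fun y _ => by rw [mul_comm]

section Walks

variable {p : ℕ}

theorem walkWeight_eq_zero_of_not_isWalk {E : Finset (Fin p × Fin p)}
    {B : Matrix (Fin p) (Fin p) ℝ} (hB : ∀ i j, (i, j) ∉ E → B j i = 0) {l : ℕ}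
    {f : Fin (l + 1) → Fin p} (hf : ¬IsWalk E f) : walkWeight B f = 0 := by
  obtain ⟨s, hs⟩ := not_forall.1 hf
  exact prod_eq_zero (mem_univ s) (hB _ _ hs)

theorem walkWeight_cons (B : Matrix (Fin p) (Fin p) ℝ) {l : ℕ} (v : Fin p)
    (g : Fin (l + 1) → Fin p) :
    walkWeight B (Fin.cons v g : Fin (l + 2) → Fin p) = B (g 0) v * walkWeight B g := by
  simp only [walkWeight, Fin.prod_univ_succ, Fin.cons_succ, Fin.castSucc_zero, Fin.cons_zero,
    ← Fin.succ_castSucc]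

theorem sum_walkWeight_eq_pow_apply (B : Matrix (Fin p) (Fin p) ℝ) (l : ℕ) (i r : Fin p) :
    ∑ f : Fin (l + 1) → Fin p, (if f 0 = r ∧ f (Fin.last l) = i then walkWeight B f else 0)
      = (B ^ l) i r := by
  induction l generalizing r with
  | zero =>
    rw [← (Equiv.funUnique (Fin 1) (Fin p)).symm.sum_comp]
    simp [walkWeight, one_apply, ite_and, eq_comm]
  | succ l ih =>
    rw [← (Fin.consEquiv fun _ => Fin p).sum_comp, Fintype.sum_prod_type, pow_succ, mul_apply]
    simp only [Fin.consEquiv, Equiv.coe_fn_mk, Fin.cons_zero, ← Fin.succ_last, Fin.cons_succ,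
      walkWeight_cons, ← ih, ite_and, sum_mul, ite_mul, zero_mul]
    rw [sum_comm]
    conv_rhs => rw [sum_comm]
    simp only [sum_ite_eq', sum_ite_eq, mem_univ, if_true]
    exact sum_congr rfl fun g _ => by rw [mul_comm]

theorem baseTrekSum_eq {E₀ : Finset (Fin p × Fin p)} {B : Matrix (Fin p) (Fin p) ℝ}
    (hB : ∀ i j, (i, j) ∉ E₀ → B j i = 0) (t : ℝ) (w : Fin p → ℝ) (i j : Fin p)
    (x y : ℕ) :
    baseTrekSum p E₀ B t w i j x y = Ccoef x y t * (B ^ x * diagonal w * (B ^ y)ᵀ) i j := by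
  have hdrop : ∀ (f : Fin (x + 1) → Fin p) (g : Fin (y + 1) → Fin p),
      (if IsWalk E₀ f ∧ IsWalk E₀ g ∧
          f 0 = g 0 ∧ f (Fin.last x) = i ∧ g (Fin.last y) = j
        then Ccoef x y t * walkWeight B f * walkWeight B g * w (f 0) else 0)
      = if f 0 = g 0 ∧ f (Fin.last x) = i ∧ g (Fin.last y) = j
        then Ccoef x y t * walkWeight B f * walkWeight B g * w (f 0) else 0 := by
    intro f g
    by_cases hf : IsWalk E₀ f
    · by_cases hg : IsWalk E₀ g
      · simp only [hf, hg, true_and]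
      · simp [walkWeight_eq_zero_of_not_isWalk hB hg]
    · simp [walkWeight_eq_zero_of_not_isWalk hB hf]
  have hentry : (B ^ x * diagonal w * (B ^ y)ᵀ) i j = ∑ r, (B ^ x) i r * w r * (B ^ y) j r := by
    rw [mul_apply]; simp only [mul_diagonal, transpose_apply]
  calc baseTrekSum p E₀ B t w i j x y
      = ∑ f : Fin (x + 1) → Fin p, ∑ g : Fin (y + 1) → Fin p,
          if f 0 = g 0 ∧ f (Fin.last x) = i ∧ g (Fin.last y) = j
          then Ccoef x y t * walkWeight B f * walkWeight B g * w (f 0) else 0 := by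
        simp only [baseTrekSum, hdrop]
    _ = ∑ f : Fin (x + 1) → Fin p, ∑ g : Fin (y + 1) → Fin p, ∑ r,
          (if f 0 = r ∧ f (Fin.last x) = i then walkWeight B f else 0) * (Ccoef x y t * w r) *
            (if g 0 = r ∧ g (Fin.last y) = j then walkWeight B g else 0) := by
        refine sum_congr rfl fun f _ => sum_congr rfl fun g _ => ?_
        rw [Fintype.sum_eq_single (f 0) fun r hr => by simp [Ne.symm hr]]
        by_cases h1 : f 0 = g 0 <;> by_cases h2 : f (Fin.last x) = i <;>
          by_cases h3 : g (Fin.last y) = j <;>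
          simp [h1, h2, h3, eq_comm (a := g 0), mul_comm, mul_left_comm, mul_assoc]
    _ = ∑ r, (B ^ x) i r * (Ccoef x y t * w r) * (B ^ y) j r := by
        simp only [← sum_walkWeight_eq_pow_apply, sum_mul, mul_sum]
        exact ((sum_congr rfl fun _ _ => sum_comm).trans sum_comm).trans
          (sum_congr rfl fun _ _ => sum_comm)
    _ = _ := by
        rw [hentry, mul_sum]
        exact sum_congr rfl fun r _ => by ring

end Walks

theorem hasSum_smul_one_add_pow_mul_mul_transpose_pow {n : Type*} [Fintype n] [DecidableEq n]
    {t : ℝ} (ht : |t| < 1) {B : Matrix n n ℝ} {p : ℕ} (hBp : B ^ p = 0) (D : Matrix n n ℝ) :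
    HasSum (fun l => (t • 1 + B) ^ l * D * ((t • 1 + B)ᵀ) ^ l)
      (∑ x ∈ range p, ∑ y ∈ range p, Ccoef x y t • (B ^ x * D * (B ^ y)ᵀ)) := by
  refine (hasSum_sum fun x _ => hasSum_sum fun y _ =>
    (hasSum_choose_mul_pow_mul_choose_mul_pow ht x y).smul_const _).congr_fun fun l => ?_
  rw [← transpose_pow, smul_one_add_pow_eq_sum_of_pow_eq_zero t hBp,
    sum_smul_mul_mul_transpose_sum_smul]

theorem stmt_4_general (p : ℕ) (E₀ : Finset (Fin p × Fin p))
    (hdag : ∃ lt : Fin p → Fin p → Prop, IsStrictTotalOrder (Fin p) lt ∧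
      ∀ i j : Fin p, (i, j) ∈ E₀ → lt i j)
    (t : ℝ) (ht : |t| < 1)
    (B : Matrix (Fin p) (Fin p) ℝ) (hB : ∀ i j : Fin p, (i, j) ∉ E₀ → B j i = 0)
    (w : Fin p → ℝ) :
    (∀ μ ∈ spectrum ℂ ((t • (1 : Matrix (Fin p) (Fin p) ℝ) + B).map (algebraMap ℝ ℂ)),
        ‖μ‖ < 1) ∧
    ∀ i j : Fin p,
      (∑' l : ℕ, (t • (1 : Matrix (Fin p) (Fin p) ℝ) + B) ^ l * Matrix.diagonal w *
          ((t • (1 : Matrix (Fin p) (Fin p) ℝ) + B)ᵀ) ^ l) i j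
        = ∑' x : ℕ, ∑' y : ℕ, baseTrekSum p E₀ B t w i j x y := by
  obtain ⟨lt, hlt, hE⟩ := hdag
  have hBp : B ^ p = 0 := by
    simpa using B.pow_card_eq_zero_of_apply_ne_zero lt fun i j hij =>
      hE j i (by_contra fun h => hij (hB j i h))
  refine ⟨fun μ hμ => ?_, fun i j => ?_⟩
  · obtain rfl := Matrix.spectrum_map_smul_one_add_subset t ⟨p, hBp⟩ hμ
    simpa using ht
  · have hvanish (x y : ℕ) (h : p ≤ x ∨ p ≤ y) : B ^ x * diagonal w * (B ^ y)ᵀ = 0 := by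
      rcases h with h | h <;> simp [pow_eq_zero_of_le h hBp]
    have hrow (x : ℕ) : ∑' y, Ccoef x y t * (B ^ x * diagonal w * (B ^ y)ᵀ) i j
        = ∑ y ∈ range p, Ccoef x y t * (B ^ x * diagonal w * (B ^ y)ᵀ) i j :=
      tsum_eq_sum fun y hy => by
        rw [hvanish x y (.inr (by simpa using hy)), Matrix.zero_apply, mul_zero]
    simp only [(hasSum_smul_one_add_pow_mul_mul_transpose_pow ht hBp _).tsum_eq,
      baseTrekSum_eq hB, hrow, Matrix.sum_apply, Matrix.smul_apply, smul_eq_mul]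
    exact (tsum_eq_sum fun x hx => sum_eq_zero fun y _ => by
      rw [hvanish x y (.inl (by simpa using hx)), Matrix.zero_apply, mul_zero]).symm

/-- Restricted trek rule for DAGs with constant self-loop parameter:
`A = t·I + B` is Schur stable and the steady-state covariance
`Σ = ∑_{l=0}^∞ A^l D (Aᵀ)^l` (with `D = diag(w)`) is given by the base trek rule. -/
theorem stmt_4 (p : ℕ) (hp : 1 ≤ p) (E₀ : Finset (Fin p × Fin p))
    (hirr : ∀ i j : Fin p, (i, j) ∈ E₀ → i ≠ j)
    (hdag : ∃ lt : Fin p → Fin p → Prop, IsStrictTotalOrder (Fin p) lt ∧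
      ∀ i j : Fin p, (i, j) ∈ E₀ → lt i j)
    (t : ℝ) (ht : |t| < 1)
    (B : Matrix (Fin p) (Fin p) ℝ) (hB : ∀ i j : Fin p, (i, j) ∉ E₀ → B j i = 0)
    (w : Fin p → ℝ) :
    (∀ μ ∈ spectrum ℂ ((t • (1 : Matrix (Fin p) (Fin p) ℝ) + B).map (algebraMap ℝ ℂ)),
        ‖μ‖ < 1) ∧
    ∀ i j : Fin p,
      (∑' l : ℕ, (t • (1 : Matrix (Fin p) (Fin p) ℝ) + B) ^ l * Matrix.diagonal w *
          ((t • (1 : Matrix (Fin p) (Fin p) ℝ) + B)ᵀ) ^ l) i j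
        = ∑' x : ℕ, ∑' y : ℕ, baseTrekSum p E₀ B t w i j x y :=
  stmt_4_general p E₀ hdag t ht B hB w
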